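/- Let H be a graded-commutative ℚ-algebra whose reduced part H⁺ satisfies (H⁺)³ = 0. Then for the r-fold tensor product H^{⊗r}, the reduced part satisfies ((H^{⊗r})⁺)^{2r+1} = 0. Consequently, any product of 2r+1 elements of the kernel of the multiplication H^{⊗r} → H that lie in positive degree vanishes, i.e. zcl_r(H) ≤ 2r. -/

import Mathlib

/-!
Let `K = ker proj₀ = H⁺`. Splitting every factor as `id = (id - proj₀) + proj₀`, the kernel of
`proj₀^{⊗r}` lies in `V₁ + ⋯ + V_r`, where `V_i` is spanned by the pure tensors whose `i`-th
factor lies in `K`. Multiplying pure tensors factorwise gives `V_i³ ⊆ V_i(K³) = 0`, and in a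
commutative semiring a sum of `r` elements with vanishing cube has vanishing `(2r+1)`-st power.
A product of `2r+1` elements of the kernel lies in its `(2r+1)`-st power, hence vanishes.
-/

open scoped TensorProduct

/-- The multiplication map `μ_r : H^{⊗r} → H`, `a₁ ⊗ ⋯ ⊗ a_r ↦ a₁ ⋯ a_r`. -/
noncomputable def mulAlgHom (H : Type*) [CommRing H] [Algebra ℚ H] (r : ℕ) :
    (⨂[ℚ] _ : Fin r, H) →ₐ[ℚ] H :=
  PiTensorProduct.liftAlgHom (MultilinearMap.mkPiAlgebra ℚ (Fin r) H)
    (by simp) (by intro x y; simp [Finset.prod_mul_distrib])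

theorem Finset.sum_pow_eq_zero_of_pow_succ_eq_zero {ι R : Type*} [CommSemiring R] {f : ι → R}
    {k : ℕ} (s : Finset ι) (hf : ∀ i ∈ s, f i ^ (k + 1) = 0) :
    (∑ i ∈ s, f i) ^ (k * s.card + 1) = 0 := by
  classical
  induction s using Finset.induction with
  | empty => simp
  | insert j s hj ih =>
    rw [Finset.sum_insert hj]
    refine (Commute.all _ _).add_pow_eq_zero_of_add_le_succ_of_pow_eq_zero
      (hf j (mem_insert_self j s)) (ih fun i hi => hf i (mem_insert_of_mem hi)) ?_
    rw [card_insert_of_notMem hj]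
    ring_nf
    omega

theorem Submodule.prod_eq_zero_of_mem_of_pow_eq_bot {R A : Type*} [CommSemiring R]
    [CommSemiring A] [Algebra R A] {K : Submodule R A} {n : ℕ} (hK : K ^ n = ⊥)
    (f : Fin n → A) (hf : ∀ i, f i ∈ K) : ∏ i, f i = 0 := by
  open scoped Pointwise in
  have hmem : ∏ i, f i ∈ (K : Set A) ^ n := by
    simpa using Set.finsetProd_mem_finsetProd Finset.univ (fun _ => (K : Set A)) f
      fun i _ => hf i
  simpa [hK] using K.pow_subset_pow hmem

namespace PiTensorProduct

variable {ι : Type*}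

section Module

variable {R : Type*} [CommSemiring R] {s t : ι → Type*} [∀ i, AddCommMonoid (s i)]
  [∀ i, Module R (s i)] [∀ i, AddCommMonoid (t i)] [∀ i, Module R (t i)]

def factorSpan (i : ι) (K : Submodule R (s i)) : Submodule R (⨂[R] i, s i) :=
  Submodule.span R {x | ∃ m : Π i, s i, m i ∈ K ∧ tprod R m = x}

theorem factorSpan_bot (i : ι) : factorSpan (R := R) (s := s) i ⊥ = ⊥ := by
  refine Submodule.span_eq_bot.mpr ?_
  rintro _ ⟨m, hm, rfl⟩
  exact (tprod R).map_coord_zero i hm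

theorem range_map_le_factorSpan (f : Π i, s i →ₗ[R] t i) {i : ι} {K : Submodule R (t i)}
    (hf : LinearMap.range (f i) ≤ K) : LinearMap.range (map f) ≤ factorSpan i K := by
  rw [map_range_eq_span_tprod]
  exact Submodule.span_mono fun _ ⟨m, hm⟩ => ⟨_, hf ⟨m i, rfl⟩, hm⟩

theorem map_add_eq_sum_map_piecewise [Fintype ι] [DecidableEq ι] (f g : Π i, s i →ₗ[R] t i) :
    map (f + g) = ∑ T : Finset ι, map (T.piecewise f g) :=
  (mapMultilinear R s t).map_add_univ f g

end Module

section Ring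

variable [Fintype ι] {R : Type*} [CommRing R] {s : ι → Type*} [∀ i, AddCommGroup (s i)]
  [∀ i, Module R (s i)]

theorem ker_map_le_sum_factorSpan {p : Π i, s i →ₗ[R] s i} (hp : ∀ i, IsIdempotentElem (p i)) :
    LinearMap.ker (map p) ≤ ∑ i, factorSpan i (LinearMap.ker (p i)) := by
  classical
  intro x hx
  have hsum : x = ∑ T : Finset ι, map (T.piecewise (fun i => LinearMap.id - p i) p) x := by
    have hid : (fun i => LinearMap.id - p i) + p = fun i => LinearMap.id := by
      funext i; exact sub_add_cancel _ _
    rw [← LinearMap.sum_apply, ← map_add_eq_sum_map_piecewise, hid, map_id, LinearMap.id_apply]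
  -- every term but `p ⊗ ⋯ ⊗ p` has a factor `id - p`, whose range is `ker p`
  rw [hsum, ← Finset.add_sum_erase _ _ (Finset.mem_univ (∅ : Finset ι))]
  refine Submodule.add_mem _ (by simp [LinearMap.mem_ker.mp hx])
    (Submodule.sum_mem _ fun T hT => ?_)
  obtain ⟨i, hi⟩ := Finset.nonempty_iff_ne_empty.mpr (Finset.ne_of_mem_erase hT)
  have hrange : LinearMap.range (map (T.piecewise (fun i => LinearMap.id - p i) p)) ≤
      factorSpan i (LinearMap.ker (p i)) :=
    range_map_le_factorSpan _ (by simp [hi, LinearMap.IsIdempotentElem.ker_eq_range (hp i)])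
  exact Finset.single_le_sum (f := fun i => factorSpan i (LinearMap.ker (p i)))
    (fun _ _ => bot_le) (Finset.mem_univ i) (hrange ⟨x, rfl⟩)

end Ring

section Algebra

variable {R : Type*} [CommSemiring R] {A : ι → Type*} [∀ i, CommSemiring (A i)]
  [∀ i, Algebra R (A i)]

theorem factorSpan_mul_le (i : ι) (K L : Submodule R (A i)) :
    factorSpan i K * factorSpan i L ≤ factorSpan i (K * L) := by
  rw [factorSpan, factorSpan, Submodule.span_mul_span]
  refine Submodule.span_mono ?_
  rintro _ ⟨_, ⟨a, ha, rfl⟩, _, ⟨b, hb, rfl⟩, rfl⟩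
  exact ⟨a * b, Submodule.mul_mem_mul ha hb, (tprod_mul_tprod a b).symm⟩

theorem factorSpan_pow_le (i : ι) (K : Submodule R (A i)) (n : ℕ) :
    factorSpan i K ^ (n + 1) ≤ factorSpan i (K ^ (n + 1)) := by
  induction n with
  | zero => simp
  | succ n ih =>
    rw [pow_succ, pow_succ K]
    exact (mul_le_mul' ih le_rfl).trans (factorSpan_mul_le i _ _)

theorem factorSpan_pow_eq_bot (i : ι) {K : Submodule R (A i)} {n : ℕ} (hK : K ^ (n + 1) = ⊥) :
    factorSpan i K ^ (n + 1) = ⊥ :=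
  le_bot_iff.mp <| (factorSpan_pow_le i K n).trans_eq (by rw [hK, factorSpan_bot])

end Algebra

end PiTensorProduct

theorem GradedAlgebra.isIdempotentElem_proj {ι R A : Type*} [DecidableEq ι] [AddMonoid ι]
    [CommSemiring R] [Semiring A] [Algebra R A] (𝒜 : ι → Submodule R A) [GradedAlgebra 𝒜]
    (i : ι) :
    IsIdempotentElem (GradedAlgebra.proj 𝒜 i) := by
  ext x; simp [GradedAlgebra.proj_apply]

theorem stmt_14_general (H : Type*) [CommRing H] [Algebra ℚ H]
    (𝒜 : ℕ → Submodule ℚ H) [GradedAlgebra 𝒜]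
    (hH : (LinearMap.ker (GradedAlgebra.proj 𝒜 0) : Submodule ℚ H) ^ 3 = ⊥)
    (r : ℕ) :
    (LinearMap.ker (PiTensorProduct.map fun _ : Fin r => GradedAlgebra.proj 𝒜 0) :
        Submodule ℚ (⨂[ℚ] _ : Fin r, H)) ^ (2 * r + 1) = ⊥ ∧
    (∀ f : Fin (2 * r + 1) → ⨂[ℚ] _ : Fin r, H,
      (∀ i, (PiTensorProduct.map fun _ : Fin r => GradedAlgebra.proj 𝒜 0) (f i) = 0 ∧
        mulAlgHom H r (f i) = 0) →
      (∏ i, f i) = 0) := by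
  have hsum : (∑ i : Fin r,
      PiTensorProduct.factorSpan i (LinearMap.ker (GradedAlgebra.proj 𝒜 0))) ^ (2 * r + 1) = 0 := by
    have h := Finset.sum_pow_eq_zero_of_pow_succ_eq_zero (k := 2) Finset.univ
      fun i _ => PiTensorProduct.factorSpan_pow_eq_bot (R := ℚ) (A := fun _ : Fin r => H) i hH
    rwa [Finset.card_univ, Fintype.card_fin] at h
  have hbot : (LinearMap.ker (PiTensorProduct.map fun _ : Fin r => GradedAlgebra.proj 𝒜 0) :
      Submodule ℚ (⨂[ℚ] _ : Fin r, H)) ^ (2 * r + 1) = ⊥ :=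
    le_bot_iff.mp <| (pow_le_pow_left' (PiTensorProduct.ker_map_le_sum_factorSpan
      fun _ => GradedAlgebra.isIdempotentElem_proj 𝒜 0) _).trans hsum.le
  exact ⟨hbot, fun f hf =>
    Submodule.prod_eq_zero_of_mem_of_pow_eq_bot hbot f fun i => LinearMap.mem_ker.mpr (hf i).1⟩

/-- For a (graded-)commutative graded `ℚ`-algebra `H` whose reduced part `H⁺` (the elements
with vanishing degree-zero component) satisfies `(H⁺)³ = 0`, the reduced part of the `r`-fold
tensor power `H^{⊗r}` (the kernel of the projection `(proj₀)^{⊗r}` onto multidegree zero)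
satisfies `((H^{⊗r})⁺)^{2r+1} = 0`; consequently any product of `2r+1` positive-degree
elements of the kernel of `μ_r : H^{⊗r} → H` vanishes, i.e. `zcl_r(H) ≤ 2r`. -/
theorem stmt_14 (H : Type*) [CommRing H] [Algebra ℚ H]
    (𝒜 : ℕ → Submodule ℚ H) [GradedAlgebra 𝒜]
    (hH : (LinearMap.ker (GradedAlgebra.proj 𝒜 0) : Submodule ℚ H) ^ 3 = ⊥)
    (r : ℕ) (hr : 2 ≤ r) :
    (LinearMap.ker (PiTensorProduct.map fun _ : Fin r => GradedAlgebra.proj 𝒜 0) :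
        Submodule ℚ (⨂[ℚ] _ : Fin r, H)) ^ (2 * r + 1) = ⊥ ∧
    (∀ f : Fin (2 * r + 1) → ⨂[ℚ] _ : Fin r, H,
      (∀ i, (PiTensorProduct.map fun _ : Fin r => GradedAlgebra.proj 𝒜 0) (f i) = 0 ∧
        mulAlgHom H r (f i) = 0) →
      (∏ i, f i) = 0) :=
  stmt_14_general H 𝒜 hH r
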